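/- Let particles have distinct reference positions X_j ∈ ℝ^d (for j in a finite neighbour set N of particle i, with X_j ≠ X_i for j ≠ i) and suppose the deformation is homogeneous (affine): x_k = A X_k + b for all particles k, with A ∈ ℝ^{d×d}, b ∈ ℝ^d. Suppose the averaged deformation gradient is exact, F_i = A. Then the improved bond-based deformation gradient F_{ij} = F_i − (F_i n) ⊗ n + ((x_j − x_i)/r) ⊗ n (with r = ‖X_j − X_i‖, n = (X_j − X_i)/r) equals A for every j ≠ i; consequently, if the kernel values satisfy the partition of unity Σ_{j∈N} V_j W_{ij} = 1 (with F_{ii} := F_i), the smoothed deformation gradient F_i^c = Σ_{j∈N} V_j W_{ij} F_{ij} equals A, i.e. the proposed formulation reproduces homogeneous deformations exactly. -/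

import Mathlib

open Matrix Finset

/-- Exact reproduction of homogeneous (affine) deformations by the improved
bond-based deformation gradient: if `x_k = A X_k + b` for all particles and the
averaged deformation gradient is exact (`F_i = A`), then every bond-based
gradient `F_ij` (for `j ≠ i`) equals `A`; consequently, under the partition of
unity `∑ V_j W_ij = 1` (with `F_ii = F_i`), the smoothed deformation gradient
`F_i^c = ∑ V_j W_ij F_ij` equals `A`. -/
theorem bond_based_deformation_gradient_reproduces_affine
    {d : ℕ} {ι : Type*} [DecidableEq ι] (N : Finset ι) (i : ι) (hiN : i ∈ N)
    (X x : ι → EuclideanSpace ℝ (Fin d))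
    (hX : ∀ j ∈ N, j ≠ i → X j ≠ X i)
    (A : Matrix (Fin d) (Fin d) ℝ) (b : EuclideanSpace ℝ (Fin d))
    (hx : ∀ k, x k = (show EuclideanSpace ℝ (Fin d) from WithLp.toLp 2 (A *ᵥ X k)) + b)
    (Fi : Matrix (Fin d) (Fin d) ℝ) (hFi : Fi = A)
    (V W : ι → ℝ)
    (Fb : ι → Matrix (Fin d) (Fin d) ℝ)
    (hFb : ∀ j, Fb j =
      if j = i then Fi
      else
        Fi - vecMulVec (Fi *ᵥ (‖X j - X i‖⁻¹ • (X j - X i))) (‖X j - X i‖⁻¹ • (X j - X i))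
          + vecMulVec (‖X j - X i‖⁻¹ • (x j - x i)) (‖X j - X i‖⁻¹ • (X j - X i))) :
    (∀ j ∈ N, j ≠ i → Fb j = A) ∧
    ((∑ j ∈ N, V j * W j) = 1 → ∑ j ∈ N, (V j * W j) • Fb j = A) := by
  have hdiff : ∀ j, ‖X j - X i‖⁻¹ • (x j - x i)
      = A *ᵥ (‖X j - X i‖⁻¹ • (X j - X i)) := by
    intro j
    have h1 : x j - x i = (show EuclideanSpace ℝ (Fin d) from WithLp.toLp 2 (A *ᵥ (X j - X i))) := by
      rw [hx j, hx i]
      rw [Matrix.mulVec_sub, WithLp.toLp_sub]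
      abel
    rw [show (x j).ofLp - (x i).ofLp = (x j - x i).ofLp from rfl, h1]
    exact (Matrix.mulVec_smul A ‖X j - X i‖⁻¹ ((X j).ofLp - (X i).ofLp)).symm
  have key : ∀ j, Fb j = A := by
    intro j
    rw [hFb j]
    by_cases hj : j = i
    · simp [hj, hFi]
    · simp only [hj, if_false, WithLp.ofLp_smul, WithLp.ofLp_sub, hdiff j, hFi]
      abel
  refine ⟨fun j _ _ => key j, fun hsum => ?_⟩
  calc ∑ j ∈ N, (V j * W j) • Fb j = ∑ j ∈ N, (V j * W j) • A := by
        exact Finset.sum_congr rfl fun j _ => by rw [key j]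
    _ = (∑ j ∈ N, V j * W j) • A := by rw [Finset.sum_smul]
    _ = A := by rw [hsum, one_smul]
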